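/- arXiv:1910.09140 — 6 statements merged into one kernel-verified Lean document; each statement's English description precedes it below -/
import Mathlib

section
/- Let K be a finite index set, let Q₀ be an n×n real symmetric positive definite matrix, and for each k ∈ K let Q_k be an n×n real symmetric positive semidefinite matrix. Then the set function f(F) := log det(Q₀ + Σ_{k∈F} Q_k) − log det(Q₀), defined for F ⊆ K, is normalized, monotone, and submodular. -/
/-!
Write a positive semidefinite `S` as `Bᴴ * B`. The matrix determinant lemma gives
`det (A + S) = det A * det (1 + B * A⁻¹ * Bᴴ)`, and `det (1 + P) ≥ 1` for `P ⪰ 0`, which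
yields monotonicity. Since inversion is antitone on positive definite matrices, the gain factor
`det (1 + B * A⁻¹ * Bᴴ)` can only shrink when `A` grows, which is submodularity.
-/

open scoped MatrixOrder ComplexOrder

namespace Matrix

variable {n : Type*} [Fintype n] [DecidableEq n]

theorem PosSemidef.det_one_add {P : Matrix n n ℝ} (hP : P.PosSemidef) :
    (1 + P).det = ∏ i, (1 + hP.isHermitian.eigenvalues i) := by
  have hcfc : 1 + P = cfc (fun x : ℝ => 1 + x) P := by
    rw [cfc_const_add (1 : ℝ) (fun x => x) P, cfc_id' ℝ P, Algebra.algebraMap_eq_smul_one,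
      one_smul]
  rw [hcfc, hP.isHermitian.cfc_eq]
  simp [IsHermitian.cfc, -Unitary.conjStarAlgAut_apply, det_diagonal]

theorem PosSemidef.one_le_det_one_add {P : Matrix n n ℝ} (hP : P.PosSemidef) :
    1 ≤ (1 + P).det := by
  rw [hP.det_one_add]
  exact Finset.one_le_prod fun i _ => le_add_of_nonneg_right (hP.eigenvalues_nonneg i)

theorem PosSemidef.exists_eq_conjTranspose_mul_self {S : Matrix n n ℝ} (hS : S.PosSemidef) :
    ∃ B : Matrix n n ℝ, S = Bᴴ * B :=
  CStarAlgebra.nonneg_iff_eq_star_mul_self.mp hS.nonneg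

theorem PosDef.det_le_det_add {A D : Matrix n n ℝ} (hA : A.PosDef) (hD : D.PosSemidef) :
    A.det ≤ (A + D).det := by
  obtain ⟨B, rfl⟩ := hD.exists_eq_conjTranspose_mul_self
  rw [det_add_mul _ _ (isUnit_iff_ne_zero.mpr hA.det_pos.ne')]
  exact le_mul_of_one_le_right hA.det_pos.le
    (hA.inv.posSemidef.mul_mul_conjTranspose_same B).one_le_det_one_add

variable {𝕜 : Type*} [RCLike 𝕜]

theorem PosDef.posSemidef_inv_sub_inv_add {M T : Matrix n n 𝕜} (hM : M.PosDef)
    (hT : T.PosSemidef) : (M⁻¹ - (M + T)⁻¹).PosSemidef := by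
  set N := M + T
  have hN : N.PosDef := hM.add_posSemidef hT
  -- `M⁻¹ - N⁻¹ = M⁻¹ * T * N⁻¹`, and `N * M⁻¹ * T = T + T * M⁻¹ * T`
  have hMN : M⁻¹ - N⁻¹ = N⁻¹ᴴ * (T + Tᴴ * M⁻¹ * T) * N⁻¹ := by
    have hMu : IsUnit M.det := (isUnit_iff_isUnit_det M).mp hM.isUnit
    have hNu : IsUnit N.det := (isUnit_iff_isUnit_det N).mp hN.isUnit
    rw [hN.isHermitian.inv.eq, hT.isHermitian.eq]
    calc M⁻¹ - N⁻¹ = M⁻¹ * (N - M) * N⁻¹ := by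
          rw [Matrix.mul_sub, Matrix.sub_mul, mul_nonsing_inv_cancel_right _ _ hNu,
            nonsing_inv_mul _ hMu, one_mul]
      _ = N⁻¹ * (N * (M⁻¹ * (N - M))) * N⁻¹ := by rw [nonsing_inv_mul_cancel_left _ _ hNu]
      _ = N⁻¹ * (T + T * M⁻¹ * T) * N⁻¹ := by
          simp only [N, add_sub_cancel_left, Matrix.add_mul, ← Matrix.mul_assoc,
            mul_nonsing_inv _ hMu, one_mul]
  rw [hMN]
  exact (hT.add (hM.inv.posSemidef.conjTranspose_mul_mul_same T)).conjTranspose_mul_mul_same _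

theorem PosDef.det_add_add_mul_det_le {M T S : Matrix n n ℝ} (hM : M.PosDef) (hT : T.PosSemidef)
    (hS : S.PosSemidef) : (M + T + S).det * M.det ≤ (M + S).det * (M + T).det := by
  have hN : (M + T).PosDef := hM.add_posSemidef hT
  obtain ⟨B, rfl⟩ := hS.exists_eq_conjTranspose_mul_self
  have hgain : (1 + B * (M + T)⁻¹ * Bᴴ).det ≤ (1 + B * M⁻¹ * Bᴴ).det := by
    have h := PosDef.one.add_posSemidef (hN.inv.posSemidef.mul_mul_conjTranspose_same B)
      |>.det_le_det_add ((hM.posSemidef_inv_sub_inv_add hT).mul_mul_conjTranspose_same B)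
    rwa [add_assoc, ← Matrix.add_mul, ← Matrix.mul_add, add_sub_cancel] at h
  rw [det_add_mul _ _ ((isUnit_iff_isUnit_det _).mp hN.isUnit),
    det_add_mul _ _ ((isUnit_iff_isUnit_det _).mp hM.isUnit)]
  have := mul_le_mul_of_nonneg_left hgain (mul_pos hN.det_pos hM.det_pos).le
  linarith

end Matrix

open Matrix

section LogDet

variable {n K : Type*} [Fintype n] [DecidableEq n] [DecidableEq K]
  {Q0 : Matrix n n ℝ} {Q : K → Matrix n n ℝ}

theorem log_det_add_sum_mono (hQ0 : Q0.PosDef) (hQ : ∀ k, (Q k).PosSemidef)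
    {X Y : Finset K} (hXY : X ⊆ Y) :
    Real.log (Q0 + ∑ k ∈ X, Q k).det ≤ Real.log (Q0 + ∑ k ∈ Y, Q k).det := by
  have hX := hQ0.add_posSemidef (posSemidef_sum X fun k _ => hQ k)
  rw [← Finset.sum_sdiff hXY, add_comm (∑ k ∈ Y \ X, Q k), ← add_assoc]
  exact Real.log_le_log hX.det_pos (hX.det_le_det_add (posSemidef_sum _ fun k _ => hQ k))

theorem log_det_add_sum_submodular (hQ0 : Q0.PosDef) (hQ : ∀ k, (Q k).PosSemidef)
    {X Y : Finset K} (hXY : X ⊆ Y) {s : K} (hsY : s ∉ Y) :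
    Real.log (Q0 + ∑ k ∈ insert s Y, Q k).det - Real.log (Q0 + ∑ k ∈ Y, Q k).det ≤
      Real.log (Q0 + ∑ k ∈ insert s X, Q k).det - Real.log (Q0 + ∑ k ∈ X, Q k).det := by
  set M := Q0 + ∑ k ∈ X, Q k
  set T := ∑ k ∈ Y \ X, Q k
  have hM : M.PosDef := hQ0.add_posSemidef (posSemidef_sum X fun k _ => hQ k)
  have hT : T.PosSemidef := posSemidef_sum _ fun k _ => hQ k
  have hY : Q0 + ∑ k ∈ Y, Q k = M + T := by
    rw [← Finset.sum_sdiff hXY, add_comm T, add_assoc]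
  have hsY' : Q0 + ∑ k ∈ insert s Y, Q k = M + T + Q s := by
    rw [Finset.sum_insert hsY, add_left_comm, hY, add_comm]
  have hsX : Q0 + ∑ k ∈ insert s X, Q k = M + Q s := by
    rw [Finset.sum_insert fun h => hsY (hXY h), add_left_comm, add_comm]
  have hMT := hM.add_posSemidef hT
  have hMS := hM.add_posSemidef (hQ s)
  have hMTS := hMT.add_posSemidef (hQ s)
  have h := Real.log_le_log (mul_pos hMTS.det_pos hM.det_pos)
    (hM.det_add_add_mul_det_le hT (hQ s))
  rw [Real.log_mul hMTS.det_pos.ne' hM.det_pos.ne',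
    Real.log_mul hMS.det_pos.ne' hMT.det_pos.ne'] at h
  rw [hY, hsY', hsX]
  linarith

end LogDet

theorem stmt_0_general {n K : Type*} [Fintype n] [DecidableEq n] [DecidableEq K]
    (Q0 : Matrix n n ℝ) (Q : K → Matrix n n ℝ)
    (hQ0 : Q0.PosDef) (hQ : ∀ k, (Q k).PosSemidef)
    (f : Finset K → ℝ)
    (hf : ∀ F : Finset K, f F = Real.log (Q0 + ∑ k ∈ F, Q k).det - Real.log Q0.det) :
    f ∅ = 0 ∧
    (∀ X Y : Finset K, X ⊆ Y → f X ≤ f Y) ∧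
    (∀ X Y : Finset K, X ⊆ Y → ∀ s, s ∉ Y →
      f (insert s Y) - f Y ≤ f (insert s X) - f X) := by
  refine ⟨by simp [hf], fun X Y hXY => ?_, fun X Y hXY s hsY => ?_⟩
  · simpa only [hf, sub_le_sub_iff_right] using log_det_add_sum_mono hQ0 hQ hXY
  · simpa only [hf, sub_sub_sub_cancel_right] using log_det_add_sum_submodular hQ0 hQ hXY hsY

/-- The log-det Fisher information criterion
`f(F) = log det(Q₀ + ∑_{k∈F} Q_k) − log det Q₀`
is normalized, monotone, and submodular. -/
theorem stmt_0 {n K : Type*} [Fintype n] [DecidableEq n] [Fintype K] [DecidableEq K]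
    (Q0 : Matrix n n ℝ) (Q : K → Matrix n n ℝ)
    (hQ0 : Q0.PosDef) (hQ : ∀ k, (Q k).PosSemidef)
    (f : Finset K → ℝ)
    (hf : ∀ F : Finset K, f F = Real.log (Q0 + ∑ k ∈ F, Q k).det - Real.log Q0.det) :
    f ∅ = 0 ∧
    (∀ X Y : Finset K, X ⊆ Y → f X ≤ f Y) ∧
    (∀ X Y : Finset K, X ⊆ Y → ∀ s, s ∉ Y →
      f (insert s Y) - f Y ≤ f (insert s X) - f X) :=
  stmt_0_general Q0 Q hQ0 hQ f hf
end

section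
/- Let A and B be n×n real symmetric positive definite matrices with B − A positive semidefinite (i.e., A ⪯ B in the Loewner order), and let S be an n×n real symmetric positive semidefinite matrix. Then log det(B + S) − log det(B) ≤ log det(A + S) − log det(A) (diminishing returns of the log-determinant under PSD updates). -/
/-!
Write `S = Tᴴ T`. Sylvester's determinant identity turns the marginal gain into
`log det (X + S) - log det X = log det (1 + T X⁻¹ Tᴴ)`, so the claim reduces to two monotonicity
facts: `A ⪯ B` implies `B⁻¹ ⪯ A⁻¹` (both say that the block matrix `[[B, 1], [1, A⁻¹]]` is
positive semidefinite, via its two Schur complements), and `det` is monotone on positive definite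
matrices, since `det (P + Rᴴ R) = det P * det (1 + R P⁻¹ Rᴴ) ≥ det P`.
-/
open Matrix
open scoped ComplexOrder MatrixOrder

namespace Matrix

variable {m n 𝕜 : Type*} [Fintype m] [DecidableEq m] [Fintype n] [DecidableEq n] [RCLike 𝕜]

theorem PosDef.posSemidef_inv_sub_inv {A B : Matrix n n 𝕜} (hA : A.PosDef) (hB : B.PosDef)
    (hAB : (B - A).PosSemidef) : (A⁻¹ - B⁻¹).PosSemidef := by
  have := hA.isUnit.invertible
  have := hB.isUnit.invertible
  have := hA.inv.isUnit.invertible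
  have hM : (fromBlocks B 1 1ᴴ A⁻¹).PosSemidef := by
    rw [PosDef.fromBlocks₂₂ _ _ hA.inv]
    simpa using hAB
  rw [PosDef.fromBlocks₁₁ _ _ hB] at hM
  simpa using hM

theorem PosSemidef.one_le_det_one_add_s2 {M : Matrix n n ℝ} (hM : M.PosSemidef) :
    1 ≤ (1 + M).det := by
  have hsa : IsSelfAdjoint M := hM.1.isSelfAdjoint
  have h : 1 + M = cfc (fun x : ℝ => 1 + x) M := by
    rw [cfc_add .., cfc_const_one .., cfc_id' ..]
  rw [h, hM.1.cfc_eq]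
  simp only [IsHermitian.cfc, det_map, det_diagonal, Function.comp_apply,
    RCLike.ofReal_real_eq_id, id]
  exact Finset.one_le_prod fun i _ => le_add_of_nonneg_right (hM.eigenvalues_nonneg i)

theorem PosDef.det_le_det_of_posSemidef_sub {P Q : Matrix n n ℝ} (hP : P.PosDef)
    (hPQ : (Q - P).PosSemidef) : P.det ≤ Q.det := by
  set R := CFC.sqrt (Q - P)
  have hR : R.IsHermitian := (CFC.sqrt_nonneg (Q - P)).posSemidef.1
  have hQ : Q = P + R * R := by rw [CFC.sqrt_mul_sqrt_self (Q - P) hPQ.nonneg]; abel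
  have hRPR : (R * P⁻¹ * R).PosSemidef := by
    simpa only [hR.eq] using hP.inv.posSemidef.conjTranspose_mul_mul_same R
  rw [hQ, det_add_mul R R ((isUnit_iff_isUnit_det P).mp hP.isUnit)]
  exact le_mul_of_one_le_right hP.det_pos.le hRPR.one_le_det_one_add_s2

theorem PosDef.log_det_add_sub_log_det {X : Matrix n n ℝ} (hX : X.PosDef) (T : Matrix m n ℝ) :
    Real.log (X + Tᴴ * T).det - Real.log X.det = Real.log (1 + T * X⁻¹ * Tᴴ).det := by
  have hpos : 0 < (1 + T * X⁻¹ * Tᴴ).det :=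
    (PosDef.one.add_posSemidef (hX.inv.posSemidef.mul_mul_conjTranspose_same T)).det_pos
  rw [det_add_mul _ _ ((isUnit_iff_isUnit_det X).mp hX.isUnit),
    Real.log_mul hX.det_pos.ne' hpos.ne', add_sub_cancel_left]

end Matrix

/-- Diminishing returns of the log-determinant under PSD updates:
if `A ⪯ B` (both symmetric PD) and `S ⪰ 0`, then
`log det(B + S) − log det B ≤ log det(A + S) − log det A`. -/
theorem stmt_2 {n : Type*} [Fintype n] [DecidableEq n]
    (A B S : Matrix n n ℝ)
    (hA : A.PosDef) (hB : B.PosDef) (hAB : (B - A).PosSemidef) (hS : S.PosSemidef) :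
    Real.log (B + S).det - Real.log B.det ≤ Real.log (A + S).det - Real.log A.det := by
  obtain ⟨T, rfl⟩ : ∃ T : Matrix n n ℝ, S = Tᴴ * T :=
    ⟨CFC.sqrt S, by rw [(CFC.sqrt_nonneg S).posSemidef.1.eq, CFC.sqrt_mul_sqrt_self S hS.nonneg]⟩
  rw [hA.log_det_add_sub_log_det, hB.log_det_add_sub_log_det]
  have hinv : (T * (A⁻¹ - B⁻¹) * Tᴴ).PosSemidef :=
    (hA.posSemidef_inv_sub_inv hB hAB).mul_mul_conjTranspose_same T
  have hBT : (1 + T * B⁻¹ * Tᴴ).PosDef :=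
    PosDef.one.add_posSemidef (hB.inv.posSemidef.mul_mul_conjTranspose_same T)
  refine Real.log_le_log hBT.det_pos (hBT.det_le_det_of_posSemidef_sub ?_)
  convert hinv using 1
  noncomm_ring
end

section
/- Let K be a finite index set, let Q₀ be an n×n real symmetric positive definite matrix, and for each k ∈ K let Q_k be an n×n real symmetric positive semidefinite matrix. Let g be a real-valued function on n×n real matrices and suppose there is a map D assigning to each symmetric positive definite matrix A an n×n matrix D(A) such that: (i) g is Fréchet differentiable at every positive definite A with derivative H ↦ trace(D(A)ᵀ H); (ii) D(A) is symmetric positive semidefinite for every positive definite A; and (iii) D is antitone with respect to the Loewner order on positive definite matrices, i.e., A ⪰ B implies D(A) ⪯ D(B). Then the set function f(X) := g(Q₀ + Σ_{k∈X} Q_k), X ⊆ K, is monotone and submodular. -/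
/-!
Along the segment `t ↦ A + t • S` with `S ⪰ 0` the derivative of `g` is `tr (D(A + tS) S)`,
which is nonnegative because both factors are PSD; this gives monotonicity. For
submodularity compare the two segments starting at `A` and at `A + P` with `P ⪰ 0`: by
antitonicity `D(A + tS) - D(A + P + tS) ⪰ 0`, so `g(A + tS) - g(A + P + tS)` is
nondecreasing in `t`, i.e. the gain from adding `S` shrinks as the base point grows.
-/

attribute [local instance] Matrix.normedAddCommGroup Matrix.normedSpace

open Matrix Set
open scoped ComplexOrder

theorem Matrix.PosSemidef.trace_mul_nonneg {n 𝕜 : Type*} [Fintype n] [RCLike 𝕜]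
    {A B : Matrix n n 𝕜} (hA : A.PosSemidef) (hB : B.PosSemidef) : 0 ≤ (A * B).trace := by
  classical
  open scoped MatrixOrder in
  obtain ⟨C, rfl⟩ := CStarAlgebra.nonneg_iff_eq_star_mul_self.mp hB.nonneg
  rw [← mul_assoc, trace_mul_cycle, star_eq_conjTranspose]
  exact (hA.mul_mul_conjTranspose_same C).trace_nonneg

theorem le_of_hasDerivAt_nonneg {φ φ' : ℝ → ℝ} {a b : ℝ} (hab : a ≤ b)
    (hφ : ∀ t ∈ Icc a b, HasDerivAt φ (φ' t) t) (hφ' : ∀ t ∈ Ioo a b, 0 ≤ φ' t) :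
    φ a ≤ φ b := by
  refine monotoneOn_of_hasDerivWithinAt_nonneg (f' := φ') (convex_Icc a b)
    (fun t ht ↦ (hφ t ht).continuousAt.continuousWithinAt) (fun t ht ↦ ?_) (fun t ht ↦ ?_)
    (left_mem_Icc.mpr hab) (right_mem_Icc.mpr hab) hab
  · rw [interior_Icc] at ht ⊢
    exact (hφ t (Ioo_subset_Icc_self ht)).hasDerivWithinAt
  · exact hφ' t (by rwa [interior_Icc] at ht)

theorem HasFDerivAt.hasDerivAt_add_smul {E : Type*} [NormedAddCommGroup E] [NormedSpace ℝ E]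
    {g : E → ℝ} {L : E →L[ℝ] ℝ} {A S : E} {t : ℝ} (hg : HasFDerivAt g L (A + t • S)) :
    HasDerivAt (fun t : ℝ ↦ g (A + t • S)) (L S) t := by
  have hpath : HasDerivAt (fun t : ℝ ↦ A + t • S) S t := by
    simpa using ((hasDerivAt_id t).smul_const S).const_add A
  exact hg.comp_hasDerivAt t hpath

theorem Matrix.PosDef.add_smul_posSemidef {n : Type*} {A S : Matrix n n ℝ} (hA : A.PosDef)
    (hS : S.PosSemidef) {t : ℝ} (ht : 0 ≤ t) :
    (A + t • S).PosDef :=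
  hA.add_posSemidef (hS.smul ht)

section TraceGradient

variable {n : Type*} [Fintype n]

def HasTraceGradientOnPosDef (g : Matrix n n ℝ → ℝ) (D : Matrix n n ℝ → Matrix n n ℝ) : Prop :=
  ∀ A : Matrix n n ℝ, A.PosDef →
    ∃ L : Matrix n n ℝ →L[ℝ] ℝ, (∀ H, L H = ((D A)ᵀ * H).trace) ∧ HasFDerivAt g L A

variable {g : Matrix n n ℝ → ℝ} {D : Matrix n n ℝ → Matrix n n ℝ} {A P S : Matrix n n ℝ}

theorem HasTraceGradientOnPosDef.hasDerivAt_add_smul (hg : HasTraceGradientOnPosDef g D)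
    {t : ℝ} (hPD : (A + t • S).PosDef) :
    HasDerivAt (fun t : ℝ ↦ g (A + t • S)) ((D (A + t • S))ᵀ * S).trace t := by
  obtain ⟨L, hL, hgL⟩ := hg _ hPD
  exact hL S ▸ hgL.hasDerivAt_add_smul

theorem HasTraceGradientOnPosDef.le_add (hg : HasTraceGradientOnPosDef g D)
    (hD : ∀ A : Matrix n n ℝ, A.PosDef → (D A).PosSemidef)
    (hA : A.PosDef) (hS : S.PosSemidef) : g A ≤ g (A + S) := by
  have hPD := fun t (ht : t ∈ Icc (0 : ℝ) 1) ↦ hA.add_smul_posSemidef hS ht.1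
  simpa using le_of_hasDerivAt_nonneg zero_le_one
    (fun t ht ↦ hg.hasDerivAt_add_smul (hPD t ht))
    (fun t ht ↦ ((hD _ (hPD t (Ioo_subset_Icc_self ht))).transpose.trace_mul_nonneg hS))

theorem HasTraceGradientOnPosDef.add_sub_le_add_sub (hg : HasTraceGradientOnPosDef g D)
    (hD : ∀ A B : Matrix n n ℝ, A.PosDef → B.PosDef →
      (A - B).PosSemidef → (D B - D A).PosSemidef)
    (hA : A.PosDef) (hP : P.PosSemidef) (hS : S.PosSemidef) :
    g (A + P + S) - g (A + P) ≤ g (A + S) - g A := by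
  have hPD := fun t (ht : t ∈ Icc (0 : ℝ) 1) ↦ hA.add_smul_posSemidef hS ht.1
  have hPD' := fun t (ht : t ∈ Icc (0 : ℝ) 1) ↦
    (hA.add_posSemidef hP).add_smul_posSemidef hS ht.1
  have key := le_of_hasDerivAt_nonneg zero_le_one
    (fun t ht ↦ (hg.hasDerivAt_add_smul (hPD t ht)).sub (hg.hasDerivAt_add_smul (hPD' t ht)))
    (fun t ht ↦ by
      have ht := Ioo_subset_Icc_self ht
      have hDgap := hD _ _ (hPD' t ht) (hPD t ht) (by simpa using hP)
      simpa [transpose_sub, sub_mul, trace_sub] using hDgap.transpose.trace_mul_nonneg hS)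
  simp only [Pi.sub_apply, zero_smul, add_zero, one_smul] at key
  linarith

end TraceGradient

theorem stmt_3_general {n K : Type*} [Fintype n] [DecidableEq K]
    (Q0 : Matrix n n ℝ) (Q : K → Matrix n n ℝ)
    (hQ0 : Q0.PosDef) (hQ : ∀ k, (Q k).PosSemidef)
    (g : Matrix n n ℝ → ℝ) (D : Matrix n n ℝ → Matrix n n ℝ)
    (hdiff : ∀ A : Matrix n n ℝ, A.PosDef →
      ∃ L : Matrix n n ℝ →L[ℝ] ℝ,
        (∀ H : Matrix n n ℝ, L H = ((D A).transpose * H).trace) ∧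
        HasFDerivAt g L A)
    (hDpsd : ∀ A : Matrix n n ℝ, A.PosDef → (D A).PosSemidef)
    (hDanti : ∀ A B : Matrix n n ℝ, A.PosDef → B.PosDef →
      (A - B).PosSemidef → (D B - D A).PosSemidef)
    (f : Finset K → ℝ)
    (hf : ∀ X : Finset K, f X = g (Q0 + ∑ k ∈ X, Q k)) :
    (∀ X Y : Finset K, X ⊆ Y → f X ≤ f Y) ∧
    (∀ X Y : Finset K, X ⊆ Y → ∀ s, s ∉ Y →
      f (insert s Y) - f Y ≤ f (insert s X) - f X) := by
  have hg : HasTraceGradientOnPosDef g D := hdiff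
  have hsum (Z : Finset K) : (∑ k ∈ Z, Q k).PosSemidef := posSemidef_sum Z fun k _ ↦ hQ k
  have hbase (X : Finset K) : (Q0 + ∑ k ∈ X, Q k).PosDef := hQ0.add_posSemidef (hsum X)
  refine ⟨fun X Y hXY ↦ ?_, fun X Y hXY s hs ↦ ?_⟩
  · rw [hf, hf, ← Finset.sum_sdiff hXY, add_comm (∑ k ∈ Y \ X, Q k), ← add_assoc]
    exact hg.le_add hDpsd (hbase X) (hsum _)
  · have hsX : s ∉ X := fun h ↦ hs (hXY h)
    rw [hf, hf, hf, hf, Finset.sum_insert hs, Finset.sum_insert hsX, ← Finset.sum_sdiff hXY]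
    convert hg.add_sub_le_add_sub hDanti (hbase X) (hsum (Y \ X)) (hQ s) using 3 <;> abel

/-- If `g` is Fréchet differentiable at every symmetric PD matrix `A` with
derivative `H ↦ trace(D(A)ᵀ H)`, where `D(A)` is symmetric PSD and `D` is
antitone for the Loewner order, then `f(X) = g(Q₀ + ∑_{k∈X} Q_k)` is monotone
and submodular. -/
theorem stmt_3 {n K : Type*} [Fintype n] [DecidableEq n] [Fintype K] [DecidableEq K]
    (Q0 : Matrix n n ℝ) (Q : K → Matrix n n ℝ)
    (hQ0 : Q0.PosDef) (hQ : ∀ k, (Q k).PosSemidef)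
    (g : Matrix n n ℝ → ℝ) (D : Matrix n n ℝ → Matrix n n ℝ)
    (hdiff : ∀ A : Matrix n n ℝ, A.PosDef →
      ∃ L : Matrix n n ℝ →L[ℝ] ℝ,
        (∀ H : Matrix n n ℝ, L H = ((D A).transpose * H).trace) ∧
        HasFDerivAt g L A)
    (hDpsd : ∀ A : Matrix n n ℝ, A.PosDef → (D A).PosSemidef)
    (hDanti : ∀ A B : Matrix n n ℝ, A.PosDef → B.PosDef →
      (A - B).PosSemidef → (D B - D A).PosSemidef)
    (f : Finset K → ℝ)
    (hf : ∀ X : Finset K, f X = g (Q0 + ∑ k ∈ X, Q k)) :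
    (∀ X Y : Finset K, X ⊆ Y → f X ≤ f Y) ∧
    (∀ X Y : Finset K, X ⊆ Y → ∀ s, s ∉ Y →
      f (insert s Y) - f Y ≤ f (insert s X) - f X) :=
  stmt_3_general Q0 Q hQ0 hQ g D hdiff hDpsd hDanti f hf
end

section
/- Let A be an n×n real symmetric positive definite matrix and let S and B be n×n real symmetric positive semidefinite matrices. Then the function δ(λ) := log det(A + S + λB) − log det(A + λB) is nonincreasing in λ on [0, ∞); its derivative at each λ ≥ 0 equals trace([(A + S + λB)⁻¹ − (A + λB)⁻¹] · B), which is nonpositive. -/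
/-!
By Jacobi's formula, `d/dt log det (M + t • B) = trace ((M + t • B)⁻¹ * B)` wherever the
determinant is nonzero, so `δ'(λ) = trace (((A + S + λB)⁻¹ - (A + λB)⁻¹) * B)`. Inversion is
antitone in the Loewner order, so `(A + λB)⁻¹ - (A + S + λB)⁻¹` is positive semidefinite, and
`trace (P * B) = trace (√P * B * √P) ≥ 0` for positive semidefinite `P` and `B`. Hence `δ' ≤ 0`
on `[0, ∞)` and `δ` is antitone there.
-/

open Matrix
open scoped MatrixOrder ComplexOrder

namespace Matrix

variable {n : Type*} [Fintype n] [DecidableEq n]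

open Polynomial in
theorem hasDerivAt_det_one_add_smul {𝕜 : Type*} [NontriviallyNormedField 𝕜]
    (C : Matrix n n 𝕜) : HasDerivAt (fun s : 𝕜 => (1 + s • C).det) C.trace 0 := by
  have hpoly : (fun s : 𝕜 => (1 + s • C).det) =
      fun s => (det (1 + (X : 𝕜[X]) • C.map Polynomial.C)).eval s := by
    funext s
    simp [eval_det, ← smul_eq_mul_diagonal]
  rw [hpoly, ← derivative_det_one_add_X_smul]
  exact Polynomial.hasDerivAt _ 0

theorem hasDerivAt_det_add_smul {𝕜 : Type*} [NontriviallyNormedField 𝕜] (M B : Matrix n n 𝕜)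
    {l : 𝕜} (h : IsUnit (M + l • B).det) :
    HasDerivAt (fun t => (M + t • B).det) ((M + l • B).det * ((M + l • B)⁻¹ * B).trace) l := by
  set N := M + l • B with hN
  have hline : ∀ t, M + t • B = N * (1 + (t - l) • (N⁻¹ * B)) := fun t => by
    rw [mul_add, mul_one, Matrix.mul_smul, mul_nonsing_inv_cancel_left _ _ h, hN, add_assoc,
      ← add_smul, add_sub_cancel]
  simp_rw [hline, det_mul]
  have hshift := HasDerivAt.comp_sub_const l l (f := fun s => (1 + s • (N⁻¹ * B)).det)
    (by simpa using hasDerivAt_det_one_add_smul (N⁻¹ * B))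
  exact hshift.const_mul N.det

theorem hasDerivAt_log_det_add_smul (M B : Matrix n n ℝ) {l : ℝ} (h : (M + l • B).det ≠ 0) :
    HasDerivAt (fun t => Real.log (M + t • B).det) ((M + l • B)⁻¹ * B).trace l := by
  convert (hasDerivAt_det_add_smul M B h.isUnit).log h using 1
  field_simp

theorem PosSemidef.trace_mul_nonneg_s8 {𝕜 : Type*} [RCLike 𝕜] {P B : Matrix n n 𝕜}
    (hP : P.PosSemidef) (hB : B.PosSemidef) : 0 ≤ (P * B).trace := by
  have hsqrt : (CFC.sqrt P)ᴴ = CFC.sqrt P := (CFC.sqrt_nonneg P).posSemidef.1.eq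
  calc 0 ≤ (CFC.sqrt P * B * CFC.sqrt P).trace := by
        simpa [hsqrt] using (hB.conjTranspose_mul_mul_same (CFC.sqrt P)).trace_nonneg
    _ = (P * B).trace := by
        rw [trace_mul_cycle, CFC.sqrt_mul_sqrt_self P hP.nonneg]

theorem PosDef.inv_le_inv_of_le {𝕜 : Type*} [RCLike 𝕜] {X Y : Matrix n n 𝕜}
    (hX : X.PosDef) (hXY : X ≤ Y) : Y⁻¹ ≤ X⁻¹ := by
  rw [le_iff] at hXY ⊢
  set S := Y - X with hS
  have hY : Y.PosDef := by simpa [hS] using hX.add_posSemidef hXY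
  have hXu : IsUnit X.det := hX.isUnit.map detMonoidHom
  have hYu : IsUnit Y.det := hY.isUnit.map detMonoidHom
  have hcore : (S + S * X⁻¹ * S).PosSemidef :=
    hXY.add (by simpa [hXY.1.eq] using hX.inv.posSemidef.conjTranspose_mul_mul_same S)
  have hid : Y⁻¹ * (S + S * X⁻¹ * S) * Y⁻¹ = X⁻¹ - Y⁻¹ := by
    simp only [hS, sub_mul, mul_sub, mul_add, add_mul, mul_assoc, mul_nonsing_inv _ hXu,
      mul_nonsing_inv _ hYu, nonsing_inv_mul _ hYu, nonsing_inv_mul_cancel_left _ _ hXu,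
      nonsing_inv_mul_cancel_left _ _ hYu, mul_one, one_mul]
    abel
  rw [← hid]
  simpa [hY.inv.1.eq] using hcore.conjTranspose_mul_mul_same Y⁻¹

theorem PosDef.trace_inv_sub_inv_mul_nonpos {𝕜 : Type*} [RCLike 𝕜] {X Y B : Matrix n n 𝕜}
    (hX : X.PosDef) (hXY : X ≤ Y) (hB : B.PosSemidef) : ((Y⁻¹ - X⁻¹) * B).trace ≤ 0 := by
  rw [← neg_sub, neg_mul, trace_neg, neg_nonpos]
  exact (le_iff.mp (hX.inv_le_inv_of_le hXY)).trace_mul_nonneg_s8 hB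

end Matrix

/-- For `A` symmetric PD and `S, B` symmetric PSD, the function
`δ(λ) = log det(A + S + λB) − log det(A + λB)` has derivative
`trace([(A + S + λB)⁻¹ − (A + λB)⁻¹] B) ≤ 0` at every `λ ≥ 0`, and is
nonincreasing on `[0, ∞)`. -/
theorem stmt_8 {n : Type*} [Fintype n] [DecidableEq n]
    (A S B : Matrix n n ℝ) (hA : A.PosDef) (hS : S.PosSemidef) (hB : B.PosSemidef)
    (δ : ℝ → ℝ)
    (hδ : ∀ l : ℝ, δ l = Real.log (A + S + l • B).det - Real.log (A + l • B).det) :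
    (∀ l : ℝ, 0 ≤ l →
      HasDerivAt δ ((((A + S + l • B)⁻¹ - (A + l • B)⁻¹) * B).trace) l ∧
      (((A + S + l • B)⁻¹ - (A + l • B)⁻¹) * B).trace ≤ 0) ∧
    AntitoneOn δ (Set.Ici (0 : ℝ)) := by
  have hderiv : ∀ l : ℝ, 0 ≤ l →
      HasDerivAt δ ((((A + S + l • B)⁻¹ - (A + l • B)⁻¹) * B).trace) l ∧
      (((A + S + l • B)⁻¹ - (A + l • B)⁻¹) * B).trace ≤ 0 := by
    intro l hl
    have hX : (A + l • B).PosDef := hA.add_posSemidef (hB.smul hl)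
    have hY : (A + S + l • B).PosDef := (hA.add_posSemidef hS).add_posSemidef (hB.smul hl)
    have hXY : A + l • B ≤ A + S + l • B := by
      rw [add_right_comm]
      exact le_add_of_nonneg_right hS.nonneg
    refine ⟨?_, hX.trace_inv_sub_inv_mul_nonpos hXY hB⟩
    rw [funext hδ, sub_mul, trace_sub]
    exact (hasDerivAt_log_det_add_smul _ _ hY.det_pos.ne').sub
      (hasDerivAt_log_det_add_smul _ _ hX.det_pos.ne')
  refine ⟨hderiv, antitoneOn_of_hasDerivWithinAt_nonpos (convex_Ici 0)
    (f' := fun l => (((A + S + l • B)⁻¹ - (A + l • B)⁻¹) * B).trace) ?_ ?_ ?_⟩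
  · exact fun l hl => (hderiv l hl).1.continuousAt.continuousWithinAt
  · rw [interior_Ici]
    exact fun l hl => (hderiv l hl.le).1.hasDerivWithinAt
  · exact fun l hl => (hderiv l (interior_subset hl)).2
end

section
/- Let K be a finite set, let f : 2^K → ℝ be normalized, monotone, and submodular, and let B be a positive natural number with B ≤ |K|. Let G₀ = ∅ and, for i = 0, 1, …, B−1, let G_{i+1} = G_i ∪ {s_i} where s_i ∈ K \ G_i satisfies f(G_i ∪ {s_i}) − f(G_i) ≥ f(G_i ∪ {k}) − f(G_i) for all k ∈ K \ G_i (a greedy choice). Then f(G_B) ≥ (1 − 1/e) · max{ f(S) : S ⊆ K, |S| ≤ B }. -/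
/-!
If `S` has at most `B` elements, submodularity bounds `f S - f (G i)` by the sum of the marginal
gains of the elements of `S` over `G i`, each of which is at most the greedy gain. Hence every greedy
step closes at least a `1 / B` fraction of the gap `f S - f (G i)`, so after `B` steps the gap is at
most `(1 - 1 / B) ^ B * f S ≤ f S / e`.
-/

open Finset

section Greedy

variable {K : Type*} [DecidableEq K] {f : Finset K → ℝ}

theorem le_add_sum_marginal_of_disjoint
    (hsub : ∀ X Y : Finset K, X ⊆ Y → ∀ s, s ∉ Y →
      f (insert s Y) - f Y ≤ f (insert s X) - f X)
    (A T : Finset K) (hAT : Disjoint T A) :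
    f (A ∪ T) ≤ f A + ∑ k ∈ T, (f (insert k A) - f A) := by
  induction T using Finset.induction_on with
  | empty => simp
  | @insert a T haT ih =>
    have haA : a ∉ A := disjoint_left.mp hAT (mem_insert_self a T)
    have hgain : f (insert a (A ∪ T)) - f (A ∪ T) ≤ f (insert a A) - f A :=
      hsub A (A ∪ T) subset_union_left a (by simp [haA, haT])
    have ih := ih (hAT.mono_left (subset_insert a T))
    rw [union_insert, sum_insert haT]
    linarith

theorem sub_le_mul_of_marginal_le
    (hmono : ∀ X Y : Finset K, X ⊆ Y → f X ≤ f Y)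
    (hsub : ∀ X Y : Finset K, X ⊆ Y → ∀ s, s ∉ Y →
      f (insert s Y) - f Y ≤ f (insert s X) - f X)
    {A S : Finset K} {B : ℕ} (hS : #S ≤ B) {δ : ℝ} (hδ : 0 ≤ δ)
    (hgain : ∀ k ∉ A, f (insert k A) - f A ≤ δ) :
    f S - f A ≤ B * δ := by
  have hsum : ∑ k ∈ S \ A, (f (insert k A) - f A) ≤ #(S \ A) • δ :=
    sum_le_card_nsmul _ _ _ fun k hk ↦ hgain k (mem_sdiff.mp hk).2
  have hcard : (#(S \ A) : ℝ) ≤ B := by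
    exact_mod_cast (card_le_card sdiff_subset).trans hS
  calc f S - f A ≤ f (A ∪ S \ A) - f A := by
        gcongr
        exact hmono _ _ (by simp)
    _ ≤ #(S \ A) * δ := by
        rw [← nsmul_eq_mul]
        linarith [le_add_sum_marginal_of_disjoint hsub A (S \ A) sdiff_disjoint]
    _ ≤ B * δ := by gcongr

theorem sub_greedy_step_le
    (hmono : ∀ X Y : Finset K, X ⊆ Y → f X ≤ f Y)
    (hsub : ∀ X Y : Finset K, X ⊆ Y → ∀ s, s ∉ Y →
      f (insert s Y) - f Y ≤ f (insert s X) - f X)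
    {A S : Finset K} {B : ℕ} (hB : 0 < B) (hS : #S ≤ B) {s : K}
    (hgreedy : ∀ k ∉ A, f (insert k A) - f A ≤ f (insert s A) - f A) :
    f S - f (insert s A) ≤ (1 - 1 / (B : ℝ)) * (f S - f A) := by
  have hδ : 0 ≤ f (insert s A) - f A := sub_nonneg.mpr (hmono _ _ (subset_insert s A))
  have hgap := sub_le_mul_of_marginal_le hmono hsub hS hδ hgreedy
  have hB' : (0 : ℝ) < B := by exact_mod_cast hB
  have hfrac : (f S - f A) / B ≤ f (insert s A) - f A := by
    rwa [div_le_iff₀' hB']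
  calc f S - f (insert s A) = (f S - f A) - (f (insert s A) - f A) := by ring
    _ ≤ (f S - f A) - (f S - f A) / B := by linarith
    _ = (1 - 1 / (B : ℝ)) * (f S - f A) := by ring

end Greedy

theorem stmt_10_general {K : Type*} [DecidableEq K]
    (f : Finset K → ℝ)
    (hnorm : f ∅ = 0)
    (hmono : ∀ X Y : Finset K, X ⊆ Y → f X ≤ f Y)
    (hsub : ∀ X Y : Finset K, X ⊆ Y → ∀ s, s ∉ Y →
      f (insert s Y) - f Y ≤ f (insert s X) - f X)
    (B : ℕ) (hB0 : 0 < B)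
    (G : ℕ → Finset K) (s : ℕ → K)
    (hG0 : G 0 = ∅)
    (hstep : ∀ i < B, s i ∉ G i ∧ G (i + 1) = insert (s i) (G i) ∧
      ∀ k : K, k ∉ G i →
        f (insert k (G i)) - f (G i) ≤ f (insert (s i) (G i)) - f (G i)) :
    ∀ S : Finset K, S.card ≤ B →
      (1 - 1 / Real.exp 1) * f S ≤ f (G B) := by
  intro S hS
  have hfS : 0 ≤ f S := hnorm ▸ hmono ∅ S (empty_subset S)
  have hB1 : (1 : ℝ) ≤ B := by exact_mod_cast hB0
  have hgap : f S - f (G B) ≤ (1 - 1 / (B : ℝ)) ^ B * (f S - f (G 0)) :=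
    le_geom (u := fun n ↦ f S - f (G n)) (by simp [inv_le_one_of_one_le₀ hB1]) B fun i hi ↦ by
      obtain ⟨-, hGi, hgreedy⟩ := hstep i hi
      simpa only [hGi] using sub_greedy_step_le hmono hsub hB0 hS hgreedy
  have hexp : (1 - 1 / (B : ℝ)) ^ B ≤ (Real.exp 1)⁻¹ := by
    simpa [Real.exp_neg] using Real.one_sub_div_pow_le_exp_neg hB1
  rw [hG0, hnorm, sub_zero] at hgap
  have : (1 - 1 / (B : ℝ)) ^ B * f S ≤ (Real.exp 1)⁻¹ * f S := by gcongr
  rw [one_div, sub_mul, one_mul]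
  linarith

/-- Nemhauser–Wolsey–Fisher greedy guarantee: for a normalized, monotone,
submodular set function `f` on a finite set `K` and a cardinality budget
`B ≤ |K|`, the greedy algorithm's output `G B` satisfies
`f(G B) ≥ (1 − 1/e) · max{ f S : |S| ≤ B }`. -/
theorem stmt_10 {K : Type*} [Fintype K] [DecidableEq K]
    (f : Finset K → ℝ)
    (hnorm : f ∅ = 0)
    (hmono : ∀ X Y : Finset K, X ⊆ Y → f X ≤ f Y)
    (hsub : ∀ X Y : Finset K, X ⊆ Y → ∀ s, s ∉ Y →
      f (insert s Y) - f Y ≤ f (insert s X) - f X)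
    (B : ℕ) (hB0 : 0 < B) (hBcard : B ≤ Fintype.card K)
    (G : ℕ → Finset K) (s : ℕ → K)
    (hG0 : G 0 = ∅)
    (hstep : ∀ i < B, s i ∉ G i ∧ G (i + 1) = insert (s i) (G i) ∧
      ∀ k : K, k ∉ G i →
        f (insert k (G i)) - f (G i) ≤ f (insert (s i) (G i)) - f (G i)) :
    ∀ S : Finset K, S.card ≤ B →
      (1 - 1 / Real.exp 1) * f S ≤ f (G B) :=
  stmt_10_general f hnorm hmono hsub B hB0 G s hG0 hstep
end

section
/- Let ω ∈ ℝ³ with ‖ω‖ = 1, and let J(ω) denote the 3×3 skew-symmetric cross-product matrix of ω (so that J(ω)v = ω × v for all v ∈ ℝ³). Then for every t ∈ ℝ, the matrix exponential satisfies exp(t · J(ω)) = I + sin(t) · J(ω) + (1 − cos(t)) · J(ω)² (Rodrigues' rotation formula). -/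
/-!
If `J³ = -J` in a real Banach algebra, then `R(t) = 1 + sin t • J + (1 - cos t) • J²` solves
`R' = R J` with `R(0) = 1`, just as `exp (t • J)` does. Hence `R(t) exp (-t • J)` has zero
derivative, so it is constantly `1`, and `R(t) = exp (t • J)`. For `J = J(ω)` one computes
`J³ = -‖ω‖² J`, so a unit vector `ω` gives `J³ = -J`.
-/

open scoped Matrix

/-- The 3×3 skew-symmetric cross-product matrix of `ω`, satisfying
`J(ω) *ᵥ v = ω × v`. -/
def crossMatrix (ω : EuclideanSpace ℝ (Fin 3)) : Matrix (Fin 3) (Fin 3) ℝ :=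
  !![0, -ω 2, ω 1; ω 2, 0, -ω 0; -ω 1, ω 0, 0]

open NormedSpace Real

noncomputable def rodrigues {A : Type*} [Ring A] [Module ℝ A] (J : A) (t : ℝ) : A :=
  1 + sin t • J + (1 - cos t) • (J * J)

section Rodrigues

variable {A : Type*} [NormedRing A] [NormedAlgebra ℝ A]

theorem rodrigues_zero (J : A) : rodrigues J 0 = 1 := by
  simp [rodrigues]

theorem hasDerivAt_rodrigues (J : A) (t : ℝ) :
    HasDerivAt (rodrigues J) (cos t • J + sin t • (J * J)) t := by
  have hsin := (hasDerivAt_sin t).smul_const J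
  have hcos := ((hasDerivAt_cos t).const_sub 1).smul_const (J * J)
  exact (((hasDerivAt_const t (1 : A)).add hsin).add hcos).congr_deriv (by simp)

theorem rodrigues_mul_of_mul_mul_self_eq_neg {J : A} (hJ : J * J * J = -J) (t : ℝ) :
    rodrigues J t * J = cos t • J + sin t • (J * J) := by
  simp only [rodrigues, add_mul, one_mul, smul_mul_assoc, hJ]
  module

variable [CompleteSpace A]

theorem exp_neg_mul_exp (x : A) : exp (-x) * exp x = 1 := by
  rw [← exp_add_of_commute_of_mem_ball (𝕂 := ℝ) (Commute.refl x).neg_left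
    (by simp [expSeries_radius_eq_top]) (by simp [expSeries_radius_eq_top]), neg_add_cancel,
    NormedSpace.exp_zero]

theorem hasDerivAt_rodrigues_mul_exp_neg_smul {J : A} (hJ : J * J * J = -J) (t : ℝ) :
    HasDerivAt (fun s : ℝ => rodrigues J s * exp (s • -J)) 0 t := by
  refine ((hasDerivAt_rodrigues J t).mul (hasDerivAt_exp_smul_const (-J) t)).congr_deriv ?_
  have hcomm : exp (t • -J) * J = J * exp (t • -J) :=
    (((Commute.refl J).neg_left).smul_left t).exp_left
  rw [← rodrigues_mul_of_mul_mul_self_eq_neg hJ, mul_neg, hcomm, mul_assoc, mul_neg,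
    add_neg_cancel]

theorem exp_smul_eq_rodrigues {J : A} (hJ : J * J * J = -J) (t : ℝ) :
    exp (t • J) = rodrigues J t := by
  have hconst : rodrigues J t * exp (t • -J) = rodrigues J 0 * exp ((0 : ℝ) • -J) :=
    is_const_of_deriv_eq_zero
      (fun s => (hasDerivAt_rodrigues_mul_exp_neg_smul hJ s).differentiableAt)
      (fun s => (hasDerivAt_rodrigues_mul_exp_neg_smul hJ s).deriv) t 0
  rw [rodrigues_zero, zero_smul, NormedSpace.exp_zero, mul_one, smul_neg] at hconst
  rw [← one_mul (exp (t • J)), ← hconst, mul_assoc, exp_neg_mul_exp, mul_one]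

end Rodrigues

theorem crossMatrix_mul_self_mul_self (ω : EuclideanSpace ℝ (Fin 3)) :
    crossMatrix ω * crossMatrix ω * crossMatrix ω = -(‖ω‖ ^ 2) • crossMatrix ω := by
  rw [EuclideanSpace.norm_sq_eq]
  ext i j
  fin_cases i <;> fin_cases j <;>
    simp [crossMatrix, Matrix.mul_apply, Fin.sum_univ_three] <;> ring

/-- Rodrigues' rotation formula: for a unit vector `ω ∈ ℝ³` and any `t ∈ ℝ`,
`exp(t J(ω)) = I + sin t · J(ω) + (1 − cos t) · J(ω)²`. -/
theorem stmt_11 (ω : EuclideanSpace ℝ (Fin 3)) (hω : ‖ω‖ = 1) (t : ℝ) :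
    NormedSpace.exp (t • crossMatrix ω) =
      1 + Real.sin t • crossMatrix ω +
        (1 - Real.cos t) • (crossMatrix ω * crossMatrix ω) := by
  -- `exp` does not depend on the norm; any submultiplicative one gives a Banach algebra.
  let : NormedRing (Matrix (Fin 3) (Fin 3) ℝ) := Matrix.linftyOpNormedRing
  let : NormedAlgebra ℝ (Matrix (Fin 3) (Fin 3) ℝ) := Matrix.linftyOpNormedAlgebra
  have hJ : crossMatrix ω * crossMatrix ω * crossMatrix ω = -crossMatrix ω := by
    rw [crossMatrix_mul_self_mul_self, hω, one_pow, neg_smul, one_smul]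
  exact exp_smul_eq_rodrigues hJ t
end
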